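/- Let $u, \omega, \rho : \mathbb{R}^2 \to \mathbb{R}$ (with $u = \nabla^\perp (-\Delta)^{-1}\omega$, i.e. $\hat u(\xi) = i\xi^\perp |\xi|^{-2} \hat\omega(\xi)$) be Schwartz functions with $\hat\omega, \hat\rho$ vanishing near the origin. Then $\langle \partial_1 \rho, \omega \rangle_{\dot H^{-1}} + \langle u_2, \rho \rangle_{L^2} = 0$, where $\langle f, g\rangle_{\dot H^{-1}} = \langle \Lambda^{-1} f, \Lambda^{-1} g \rangle_{L^2}$ and $\Lambda = (-\Delta)^{1/2}$. -/

import Mathlib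

open MeasureTheory FourierTransform

/-- The homogeneous `Ḣ^{-1}` inner product `⟨f, g⟩_{Ḣ^{-1}} = ⟨Λ^{-1} f, Λ^{-1} g⟩_{L²}`,
expressed on the Fourier side via Plancherel: the operator `Λ^{-1} = (-Δ)^{-1/2}` is the
Fourier multiplier `(2π‖ξ‖)⁻¹` (in the convention of Mathlib's Fourier transform `𝓕`). -/
noncomputable def innerHneg1 (f g : EuclideanSpace ℝ (Fin 2) → ℂ) : ℂ :=
  ∫ ξ : EuclideanSpace ℝ (Fin 2),
    (((2 * Real.pi * ‖ξ‖) ^ 2 : ℝ) : ℂ)⁻¹ * 𝓕 f ξ * (starRingEnd ℂ) (𝓕 g ξ)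

/-!
On the Fourier side `𝓕(∂₁ρ)(ξ) = 2πi ξ₁ 𝓕ρ(ξ)` and `𝓕u₂(ξ) = i ξ₁ (2π‖ξ‖²)⁻¹ 𝓕ω(ξ)`, so the
integrand of `⟨∂₁ρ, ω⟩_{Ḣ^{-1}}` is pointwise minus the complex conjugate of
`𝓕u₂ · conj 𝓕ρ`, whose integral is `⟨u₂, ρ⟩_{L²}` by Plancherel. Hence
`⟨∂₁ρ, ω⟩_{Ḣ^{-1}} = -conj ⟨u₂, ρ⟩_{L²}`, and the sum vanishes because `⟨u₂, ρ⟩_{L²}` is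
real for real-valued `u₂` and `ρ`.
-/

open scoped RealInnerProductSpace ComplexConjugate LineDeriv SchwartzMap

namespace SchwartzMap

variable {V : Type*} [NormedAddCommGroup V] [InnerProductSpace ℝ V] [FiniteDimensional ℝ V]
  [MeasurableSpace V] [BorelSpace V]

theorem fourier_fderiv_apply (f : 𝓢(V, ℂ)) (m ξ : V) :
    𝓕 (fun x => fderiv ℝ f x m) ξ = 2 * Real.pi * Complex.I * ⟪ξ, m⟫ * 𝓕 (f : V → ℂ) ξ := by
  have hm : (inner ℝ · m).HasTemperateGrowth := ((innerSL ℝ).flip m).hasTemperateGrowth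
  have h := congrArg (· ξ) (fourier_lineDerivOp_eq f m)
  simp only [fourier_coe, smul_apply, smulLeftCLM_apply_apply hm, smul_eq_mul,
    Complex.real_smul] at h
  rw [show (fun x => fderiv ℝ f x m) = ∂_{m} f from funext fun x =>
    (lineDerivOp_apply_eq_fderiv m f x).symm, h]
  ring

theorem integral_fourier_mul_conj_fourier (f g : 𝓢(V, ℂ)) :
    ∫ ξ, 𝓕 (f : V → ℂ) ξ * conj (𝓕 (g : V → ℂ) ξ) = ∫ x, f x * conj (g x) := by
  simpa [mul_comm, fourier_coe] using integral_inner_fourier_fourier g f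

end SchwartzMap

theorem conj_integral_of_im_eq_zero {α : Type*} [MeasurableSpace α] {μ : Measure α}
    {f : α → ℂ} (hf : ∀ x, (f x).im = 0) : conj (∫ x, f x ∂μ) = ∫ x, f x ∂μ := by
  rw [← integral_conj]
  exact integral_congr_ae (ae_of_all _ fun x => Complex.conj_eq_iff_im.2 (hf x))

theorem innerHneg1_fderiv_single_zero_eq_neg_conj (ρ : 𝓢(EuclideanSpace ℝ (Fin 2), ℂ))
    (ω u2 : EuclideanSpace ℝ (Fin 2) → ℂ)
    (hu2 : ∀ ξ : EuclideanSpace ℝ (Fin 2),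
      𝓕 u2 ξ = Complex.I * ((ξ 0 : ℝ) : ℂ) * (((2 * Real.pi * ‖ξ‖ ^ 2 : ℝ)) : ℂ)⁻¹ * 𝓕 ω ξ) :
    innerHneg1 (fun x => fderiv ℝ ρ x (EuclideanSpace.single 0 1)) ω
      = -conj (∫ ξ, 𝓕 u2 ξ * conj (𝓕 (ρ : EuclideanSpace ℝ (Fin 2) → ℂ) ξ)) := by
  rw [← integral_conj, ← integral_neg]
  refine integral_congr_ae (ae_of_all _ fun ξ => ?_)
  simp only [SchwartzMap.fourier_fderiv_apply, hu2, EuclideanSpace.inner_single_right, map_mul,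
    map_inv₀, Complex.conj_ofReal, Complex.conj_I, Complex.conj_conj, conj_trivial]
  push_cast
  field_simp

theorem stmt8_general (ω ρ u2 : SchwartzMap (EuclideanSpace ℝ (Fin 2)) ℂ)
    (hρ_real : ∀ x, (ρ x).im = 0)
    (hu2_real : ∀ x, (u2 x).im = 0)
    (hu2 : ∀ ξ : EuclideanSpace ℝ (Fin 2),
      𝓕 (⇑u2) ξ = Complex.I * ((ξ 0 : ℝ) : ℂ) * (((2 * Real.pi * ‖ξ‖ ^ 2 : ℝ)) : ℂ)⁻¹
        * 𝓕 (⇑ω) ξ) :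
    innerHneg1 (fun x => fderiv ℝ (⇑ρ) x (EuclideanSpace.single 0 1)) (⇑ω)
      + ∫ x : EuclideanSpace ℝ (Fin 2), u2 x * (starRingEnd ℂ) (ρ x) = 0 := by
  have h_real : conj (∫ x, u2 x * conj (ρ x)) = ∫ x, u2 x * conj (ρ x) :=
    conj_integral_of_im_eq_zero fun x => by simp [Complex.mul_im, hu2_real x, hρ_real x]
  rw [innerHneg1_fderiv_single_zero_eq_neg_conj ρ ω u2 hu2,
    SchwartzMap.integral_fourier_mul_conj_fourier, h_real, neg_add_cancel]

theorem stmt8 (ω ρ u2 : SchwartzMap (EuclideanSpace ℝ (Fin 2)) ℂ)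
    (hω_real : ∀ x, (ω x).im = 0) (hρ_real : ∀ x, (ρ x).im = 0)
    (hu2_real : ∀ x, (u2 x).im = 0)
    (hvanish : ∃ ε > (0:ℝ), ∀ ξ : EuclideanSpace ℝ (Fin 2),
      ‖ξ‖ < ε → 𝓕 (⇑ω) ξ = 0 ∧ 𝓕 (⇑ρ) ξ = 0)
    (hu2 : ∀ ξ : EuclideanSpace ℝ (Fin 2),
      𝓕 (⇑u2) ξ = Complex.I * ((ξ 0 : ℝ) : ℂ) * (((2 * Real.pi * ‖ξ‖ ^ 2 : ℝ)) : ℂ)⁻¹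
        * 𝓕 (⇑ω) ξ) :
    innerHneg1 (fun x => fderiv ℝ (⇑ρ) x (EuclideanSpace.single 0 1)) (⇑ω)
      + ∫ x : EuclideanSpace ℝ (Fin 2), u2 x * (starRingEnd ℂ) (ρ x) = 0 :=
  stmt8_general ω ρ u2 hρ_real hu2_real hu2
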